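/- arXiv:0911.2757 — 6 statements merged into one kernel-verified Lean document; each statement's English description precedes it below -/
import Mathlib

section
/- Let D, θ be real constants and C = 0. Then the real vector space Sol(0,D,θ) of triples (T, l, σ) of smooth functions ℝ → ℝ satisfying, for all t ∈ ℝ, l″(t) = 2D·l(t), σ′(t) = (θ²/4)·T″(t), and T‴(t) = 8D·T′(t), has dimension 6. -/
open Real

private lemma one_le_inf' : (1 : WithTop ℕ∞) ≤ ((⊤ : ℕ∞) : WithTop ℕ∞) := by
  exact_mod_cast le_top

private lemma ne_zero_inf' : ((⊤ : ℕ∞) : WithTop ℕ∞) ≠ 0 :=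
  (lt_of_lt_of_le zero_lt_one one_le_inf').ne'

private lemma deriv_fun_add' {f g : ℝ → ℝ} (hf : Differentiable ℝ f)
    (hg : Differentiable ℝ g) : deriv (f + g) = deriv f + deriv g :=
  funext fun t => deriv_add (hf t) (hg t)

private lemma deriv_fun_smul' (c : ℝ) {f : ℝ → ℝ} (hf : Differentiable ℝ f) :
    deriv (c • f) = c • deriv f :=
  funext fun t => deriv_const_smul c (hf t)

private lemma smooth_deriv' {f : ℝ → ℝ} (hf : ContDiff ℝ (⊤ : ℕ∞) f) :
    ContDiff ℝ (⊤ : ℕ∞) (deriv f) :=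
  (contDiff_infty_iff_deriv.mp hf).2

/-- The space of triples `(T, l, σ)` of smooth functions satisfying the isovector
system `C·l = 0`, `l″ = 2D·l`, `σ′ = (θ²/4)·T″`, `T‴ = 8D·T′`. -/
def Sol (C D θ : ℝ) : Submodule ℝ ((ℝ → ℝ) × (ℝ → ℝ) × (ℝ → ℝ)) where
  carrier := {p | ContDiff ℝ (⊤ : ℕ∞) p.1 ∧ ContDiff ℝ (⊤ : ℕ∞) p.2.1 ∧
    ContDiff ℝ (⊤ : ℕ∞) p.2.2 ∧
    (∀ t, C * p.2.1 t = 0) ∧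
    (∀ t, deriv (deriv p.2.1) t = 2 * D * p.2.1 t) ∧
    (∀ t, deriv p.2.2 t = θ ^ 2 / 4 * deriv (deriv p.1) t) ∧
    (∀ t, deriv (deriv (deriv p.1)) t = 8 * D * deriv p.1 t)}
  zero_mem' := by
    have h0 : deriv (0 : ℝ → ℝ) = 0 := funext fun x => deriv_const x 0
    refine ⟨contDiff_const, contDiff_const, contDiff_const, ?_, ?_, ?_, ?_⟩ <;>
      intro t <;> simp [h0]
  add_mem' := by
    rintro ⟨T₁, l₁, σ₁⟩ ⟨T₂, l₂, σ₂⟩ ⟨hT₁, hl₁, hσ₁, e₁, e₂, e₃, e₄⟩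
      ⟨hT₂, hl₂, hσ₂, f₁, f₂, f₃, f₄⟩
    have dT₁ : Differentiable ℝ T₁ := hT₁.differentiable ne_zero_inf'
    have dT₂ : Differentiable ℝ T₂ := hT₂.differentiable ne_zero_inf'
    have dl₁ : Differentiable ℝ l₁ := hl₁.differentiable ne_zero_inf'
    have dl₂ : Differentiable ℝ l₂ := hl₂.differentiable ne_zero_inf'
    have dσ₁ : Differentiable ℝ σ₁ := hσ₁.differentiable ne_zero_inf'
    have dσ₂ : Differentiable ℝ σ₂ := hσ₂.differentiable ne_zero_inf'
    have ddl₁ : Differentiable ℝ (deriv l₁) := (smooth_deriv' hl₁).differentiable ne_zero_inf'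
    have ddl₂ : Differentiable ℝ (deriv l₂) := (smooth_deriv' hl₂).differentiable ne_zero_inf'
    have ddT₁ : Differentiable ℝ (deriv T₁) := (smooth_deriv' hT₁).differentiable ne_zero_inf'
    have ddT₂ : Differentiable ℝ (deriv T₂) := (smooth_deriv' hT₂).differentiable ne_zero_inf'
    have dddT₁ : Differentiable ℝ (deriv (deriv T₁)) :=
      (smooth_deriv' (smooth_deriv' hT₁)).differentiable ne_zero_inf'
    have dddT₂ : Differentiable ℝ (deriv (deriv T₂)) :=
      (smooth_deriv' (smooth_deriv' hT₂)).differentiable ne_zero_inf'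
    have hl : deriv (deriv (l₁ + l₂)) = deriv (deriv l₁) + deriv (deriv l₂) := by
      rw [deriv_fun_add' dl₁ dl₂, deriv_fun_add' ddl₁ ddl₂]
    have hT2 : deriv (deriv (T₁ + T₂)) = deriv (deriv T₁) + deriv (deriv T₂) := by
      rw [deriv_fun_add' dT₁ dT₂, deriv_fun_add' ddT₁ ddT₂]
    have hT3 : deriv (deriv (deriv (T₁ + T₂)))
        = deriv (deriv (deriv T₁)) + deriv (deriv (deriv T₂)) := by
      rw [hT2, deriv_fun_add' dddT₁ dddT₂]
    refine ⟨hT₁.add hT₂, hl₁.add hl₂, hσ₁.add hσ₂, ?_, ?_, ?_, ?_⟩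
    · intro t
      simp only [Prod.mk_add_mk, Pi.add_apply, mul_add, e₁ t, f₁ t, add_zero]
    · intro t
      simp only [Prod.mk_add_mk]
      rw [hl]
      simp only [Pi.add_apply, e₂ t, f₂ t]; ring
    · intro t
      simp only [Prod.mk_add_mk]
      rw [hT2, deriv_fun_add' dσ₁ dσ₂]
      simp only [Pi.add_apply, e₃ t, f₃ t]; ring
    · intro t
      simp only [Prod.mk_add_mk]
      rw [hT3, deriv_fun_add' dT₁ dT₂]
      simp only [Pi.add_apply, e₄ t, f₄ t]; ring
  smul_mem' := by
    rintro c ⟨T, l, σ⟩ ⟨hT, hl, hσ, e₁, e₂, e₃, e₄⟩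
    have dT : Differentiable ℝ T := hT.differentiable ne_zero_inf'
    have dl : Differentiable ℝ l := hl.differentiable ne_zero_inf'
    have dσ : Differentiable ℝ σ := hσ.differentiable ne_zero_inf'
    have ddl : Differentiable ℝ (deriv l) := (smooth_deriv' hl).differentiable ne_zero_inf'
    have ddT : Differentiable ℝ (deriv T) := (smooth_deriv' hT).differentiable ne_zero_inf'
    have dddT : Differentiable ℝ (deriv (deriv T)) :=
      (smooth_deriv' (smooth_deriv' hT)).differentiable ne_zero_inf'
    have hl2 : deriv (deriv (c • l)) = c • deriv (deriv l) := by
      rw [deriv_fun_smul' c dl, deriv_fun_smul' c ddl]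
    have hT2 : deriv (deriv (c • T)) = c • deriv (deriv T) := by
      rw [deriv_fun_smul' c dT, deriv_fun_smul' c ddT]
    have hT3 : deriv (deriv (deriv (c • T))) = c • deriv (deriv (deriv T)) := by
      rw [hT2, deriv_fun_smul' c dddT]
    refine ⟨hT.const_smul c, hl.const_smul c, hσ.const_smul c, ?_, ?_, ?_, ?_⟩
    · intro t
      simp only [Prod.smul_mk, Pi.smul_apply, smul_eq_mul]
      rw [mul_comm c (l t), ← mul_assoc, e₁ t, zero_mul]
    · intro t
      simp only [Prod.smul_mk]
      rw [hl2]
      simp only [Pi.smul_apply, smul_eq_mul, e₂ t]; ring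
    · intro t
      simp only [Prod.smul_mk]
      rw [hT2, deriv_fun_smul' c dσ]
      simp only [Pi.smul_apply, smul_eq_mul, e₃ t]; ring
    · intro t
      simp only [Prod.smul_mk]
      rw [hT3, deriv_fun_smul' c dT]
      simp only [Pi.smul_apply, smul_eq_mul, e₄ t]; ring

/-!
With `C = 0` the system says exactly that the state `y = (T, T′, T″, l, l′, σ)` solves the
constant-coefficient linear system `y′ = A y` on `ℝ⁶` (`A = stateOp D θ`). Its global
solutions are the curves `t ↦ exp (t A) v`, so `p ↦ y(0)` is a linear isomorphism from `Sol 0 D θ` onto `ℝ⁶`.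
-/

open NormedSpace (exp)
open scoped ContDiff

section LinearODE

variable {E : Type*} [NormedAddCommGroup E] [NormedSpace ℝ E] [CompleteSpace E] (B : E →L[ℝ] E)

theorem hasDerivAt_exp_smul_apply (v : E) (t : ℝ) :
    HasDerivAt (fun s : ℝ => exp (s • B) v) (B (exp (t • B) v)) t :=
  (ContinuousLinearMap.apply ℝ E v).hasFDerivAt.comp_hasDerivAt t
    (hasDerivAt_exp_smul_const' B t)

theorem contDiff_exp_smul_apply {n : WithTop ℕ∞} (v : E) :
    ContDiff ℝ n (fun s : ℝ => exp (s • B) v) := by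
  have hexp : ContDiff ℝ n (exp : (E →L[ℝ] E) → E →L[ℝ] E) :=
    contDiff_iff_contDiffAt.2 fun A => (NormedSpace.exp_analytic A).contDiffAt
  exact (hexp.comp (contDiff_id.smul contDiff_const)).clm_apply contDiff_const

theorem eq_exp_smul_apply_of_hasDerivAt {x : ℝ → E} (hx : ∀ t, HasDerivAt x (B (x t)) t) :
    x = fun t => exp (t • B) (x 0) :=
  ODE_solution_unique_univ (v := fun _ => B) (s := fun _ => Set.univ) (t₀ := 0)
    (fun _ => B.lipschitz.lipschitzOnWith) (fun t => ⟨hx t, trivial⟩)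
    (fun t => ⟨hasDerivAt_exp_smul_apply B (x 0) t, trivial⟩) (by simp)

end LinearODE

noncomputable section

namespace Sol

variable (D θ : ℝ)

def stateOp : (Fin 6 → ℝ) →L[ℝ] (Fin 6 → ℝ) :=
  LinearMap.toContinuousLinearMap <| LinearMap.pi
    ![LinearMap.proj 1, LinearMap.proj 2, (8 * D) • LinearMap.proj 1,
      LinearMap.proj 4, (2 * D) • LinearMap.proj 3, (θ ^ 2 / 4) • LinearMap.proj 2]

@[simp] lemma stateOp_apply_zero (y : Fin 6 → ℝ) : stateOp D θ y 0 = y 1 := rfl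
@[simp] lemma stateOp_apply_one (y : Fin 6 → ℝ) : stateOp D θ y 1 = y 2 := rfl
@[simp] lemma stateOp_apply_two (y : Fin 6 → ℝ) : stateOp D θ y 2 = 8 * D * y 1 := rfl
@[simp] lemma stateOp_apply_three (y : Fin 6 → ℝ) : stateOp D θ y 3 = y 4 := rfl
@[simp] lemma stateOp_apply_four (y : Fin 6 → ℝ) : stateOp D θ y 4 = 2 * D * y 3 := rfl
@[simp] lemma stateOp_apply_five (y : Fin 6 → ℝ) : stateOp D θ y 5 = θ ^ 2 / 4 * y 2 := rfl

def jet (p : (ℝ → ℝ) × (ℝ → ℝ) × (ℝ → ℝ)) (t : ℝ) : Fin 6 → ℝ :=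
  ![p.1 t, deriv p.1 t, deriv (deriv p.1) t, p.2.1 t, deriv p.2.1 t, p.2.2 t]

lemma deriv_exp_smul_stateOp_apply (v : Fin 6 → ℝ) (i : Fin 6) :
    deriv (fun t : ℝ => exp (t • stateOp D θ) v i) =
      fun t => stateOp D θ (exp (t • stateOp D θ) v) i :=
  funext fun t => (hasDerivAt_pi.1 (hasDerivAt_exp_smul_apply (stateOp D θ) v t) i).deriv

variable {D θ} in
lemma hasDerivAt_jet {p : (ℝ → ℝ) × (ℝ → ℝ) × (ℝ → ℝ)} (hp : p ∈ Sol 0 D θ) (t : ℝ) :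
    HasDerivAt (jet p) (stateOp D θ (jet p t)) t := by
  obtain ⟨hT, hl, hσ, -, hl₂, hσ₁, hT₃⟩ := hp
  have hd : ∀ {f : ℝ → ℝ}, ContDiff ℝ ∞ f → HasDerivAt f (deriv f t) t :=
    fun hf => (hf.differentiable ne_zero_inf' t).hasDerivAt
  refine hasDerivAt_pi.2 fun i => ?_
  fin_cases i
  · exact hd hT
  · exact hd (smooth_deriv' hT)
  · exact (hd (smooth_deriv' (smooth_deriv' hT))).congr_deriv (hT₃ t)
  · exact hd hl
  · exact (hd (smooth_deriv' hl)).congr_deriv (hl₂ t)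
  · exact (hd hσ).congr_deriv (hσ₁ t)

lemma exp_smul_stateOp_mem_Sol (v : Fin 6 → ℝ) :
    ((fun t => exp (t • stateOp D θ) v 0, fun t => exp (t • stateOp D θ) v 3,
      fun t => exp (t • stateOp D θ) v 5) : (ℝ → ℝ) × (ℝ → ℝ) × (ℝ → ℝ)) ∈ Sol 0 D θ := by
  have hsmooth (i : Fin 6) : ContDiff ℝ ∞ fun t : ℝ => exp (t • stateOp D θ) v i :=
    contDiff_pi.1 (contDiff_exp_smul_apply _ v) i
  refine ⟨hsmooth 0, hsmooth 3, hsmooth 5, fun t => zero_mul _, fun t => ?_, fun t => ?_,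
    fun t => ?_⟩ <;>
  simp [deriv_exp_smul_stateOp_apply]

def ofInitialState : (Fin 6 → ℝ) →ₗ[ℝ] Sol 0 D θ where
  toFun v := ⟨_, exp_smul_stateOp_mem_Sol D θ v⟩
  map_add' v w := by ext <;> simp
  map_smul' c v := by ext <;> simp

lemma jet_ofInitialState (v : Fin 6 → ℝ) :
    jet (ofInitialState D θ v) = fun t => exp (t • stateOp D θ) v := by
  ext t i
  fin_cases i <;> simp [jet, ofInitialState, deriv_exp_smul_stateOp_apply]

lemma jet_ofInitialState_zero (v : Fin 6 → ℝ) : jet (ofInitialState D θ v) 0 = v := by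
  simp [jet_ofInitialState]

lemma ofInitialState_jet_zero (p : Sol 0 D θ) : ofInitialState D θ (jet p 0) = p := by
  have h := congrFun (eq_exp_smul_apply_of_hasDerivAt (stateOp D θ) (hasDerivAt_jet p.2)).symm
  ext t
  exacts [congrFun (h t) 0, congrFun (h t) 3, congrFun (h t) 5]

def initialStateEquiv : (Fin 6 → ℝ) ≃ₗ[ℝ] Sol 0 D θ :=
  LinearEquiv.ofBijective (ofInitialState D θ)
    ⟨Function.LeftInverse.injective (g := fun p : Sol 0 D θ => jet p 0) (jet_ofInitialState_zero D θ),
      Function.RightInverse.surjective (ofInitialState_jet_zero D θ)⟩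

end Sol

end

/-- If `C = 0`, the space of solutions of the isovector system has dimension `6`. -/
theorem finrank_Sol_eq_six (D θ : ℝ) :
    Module.finrank ℝ (Sol 0 D θ) = 6 := by
  rw [← (Sol.initialStateEquiv D θ).finrank_eq, Module.finrank_fin_fun]
end

section
/- Let θ ≠ 0 be a real constant and let V, η : ℝ × ℝ → ℝ be such that η(t,q) > 0 for all (t,q), for every fixed q the function t ↦ η(t,q) is differentiable, for every fixed t the function q ↦ η(t,q) is twice differentiable, and for all (t,q): θ²·∂η/∂t(t,q) = −(θ⁴/2)·∂²η/∂q²(t,q) + V(t,q)·η(t,q). Then the function S(t,q) := −θ²·ln(η(t,q)) satisfies, at every point (t,q): ∂S/∂t(t,q) + (θ²/2)·∂²S/∂q²(t,q) − (1/2)·(∂S/∂q(t,q))² + V(t,q) = 0. -/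
/-!
With `S = -θ² log η` one has `∂S/∂t = -θ² η_t/η`, `∂S/∂q = -θ² η_q/η` and
`∂²S/∂q² = -θ² (η_qq/η - (η_q/η)²)`. In the HJB expression the two terms quadratic in `η_q/η`
cancel, leaving `-(θ² η_t + (θ⁴/2) η_qq)/η + V`, which vanishes by the backward equation.
-/

open Real

theorem deriv_const_mul_log_comp {f : ℝ → ℝ} (hf : Differentiable ℝ f) (hpos : ∀ x, 0 < f x)
    (c : ℝ) : deriv (fun x => c * log (f x)) = fun x => c * (deriv f x / f x) :=
  funext fun x => (((hf x).hasDerivAt.log (hpos x).ne').const_mul c).deriv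

theorem deriv_deriv_const_mul_log_comp {f : ℝ → ℝ} (hf : Differentiable ℝ f)
    (hf' : Differentiable ℝ (deriv f)) (hpos : ∀ x, 0 < f x) (c x : ℝ) :
    deriv (deriv fun x => c * log (f x)) x
      = c * ((deriv (deriv f) x * f x - deriv f x * deriv f x) / f x ^ 2) := by
  rw [deriv_const_mul_log_comp hf hpos]
  exact (((hf' x).hasDerivAt.div (hf x).hasDerivAt (hpos x).ne').const_mul c).deriv

theorem hjb_of_backward_general (θ : ℝ) (V η : ℝ → ℝ → ℝ)
    (hpos : ∀ t q, 0 < η t q)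
    (hdt : ∀ q, Differentiable ℝ fun t => η t q)
    (hdq : ∀ t, Differentiable ℝ fun q => η t q)
    (hdq2 : ∀ t, Differentiable ℝ (deriv fun q => η t q))
    (heq : ∀ t q, θ ^ 2 * deriv (fun s => η s q) t
      = -(θ ^ 4 / 2) * deriv (deriv fun p => η t p) q + V t q * η t q)
    (S : ℝ → ℝ → ℝ) (hS : ∀ t q, S t q = -θ ^ 2 * Real.log (η t q)) :
    ∀ t q, deriv (fun s => S s q) t + θ ^ 2 / 2 * deriv (deriv fun p => S t p) q
      - 1 / 2 * (deriv (fun p => S t p) q) ^ 2 + V t q = 0 := by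
  obtain rfl : S = fun t q => -θ ^ 2 * log (η t q) := funext₂ hS
  intro t q
  rw [deriv_deriv_const_mul_log_comp (hdq t) (hdq2 t) (hpos t),
    deriv_const_mul_log_comp (hdt q) (hpos · q), deriv_const_mul_log_comp (hdq t) (hpos t)]
  have hη := (hpos t q).ne'
  field_simp
  linear_combination -2 * η t q * heq t q

/-- If `η > 0` solves the backward equation
`θ²·∂η/∂t = −(θ⁴/2)·∂²η/∂q² + V·η`, then `S = −θ²·ln η` solves the
Hamilton–Jacobi–Bellman equation
`∂S/∂t + (θ²/2)·∂²S/∂q² − (1/2)·(∂S/∂q)² + V = 0`. -/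
theorem hjb_of_backward (θ : ℝ) (hθ : θ ≠ 0) (V η : ℝ → ℝ → ℝ)
    (hpos : ∀ t q, 0 < η t q)
    (hdt : ∀ q, Differentiable ℝ fun t => η t q)
    (hdq : ∀ t, Differentiable ℝ fun q => η t q)
    (hdq2 : ∀ t, Differentiable ℝ (deriv fun q => η t q))
    (heq : ∀ t q, θ ^ 2 * deriv (fun s => η s q) t
      = -(θ ^ 4 / 2) * deriv (deriv fun p => η t p) q + V t q * η t q)
    (S : ℝ → ℝ → ℝ) (hS : ∀ t q, S t q = -θ ^ 2 * Real.log (η t q)) :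
    ∀ t q, deriv (fun s => S s q) t + θ ^ 2 / 2 * deriv (deriv fun p => S t p) q
      - 1 / 2 * (deriv (fun p => S t p) q) ^ 2 + V t q = 0 :=
  hjb_of_backward_general θ V η hpos hdt hdq hdq2 heq S hS
end

section
/- Let α > 0, λ ∈ ℝ, δ ∈ ℝ, and set θ = α/2, C = (α⁴/128)·(δ−1)·(δ−3), D = λ²/8. Define η(t,q) = exp(λδt/4 − λq²/α²)·q^{(δ−1)/2} for t ∈ ℝ and q > 0. Then for all t ∈ ℝ and all q > 0: θ²·∂η/∂t(t,q) = −(θ⁴/2)·∂²η/∂q²(t,q) + (C/q² + D·q²)·η(t,q). -/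
/-!
Writing `η = exp φ` with the exponent `φ(t,q) = λδt/4 − λq²/α² + ((δ−1)/2)·log q`, one has
`∂η/∂t = φ_t·η` and `∂²η/∂q² = (φ_qq + φ_q²)·η`. Both sides of the equation are then `η` times
a rational function of `q`, and these rational functions agree identically.
-/

open Real Filter Topology

theorem deriv_deriv_exp_comp {g g' : ℝ → ℝ} {g'' x : ℝ}
    (hg : ∀ᶠ y in 𝓝 x, HasDerivAt g (g' y) y) (hg' : HasDerivAt g' g'' x) :
    deriv (deriv fun y => exp (g y)) x = (g'' + g' x ^ 2) * exp (g x) := by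
  have hderiv : deriv (fun y => exp (g y)) =ᶠ[𝓝 x] fun y => exp (g y) * g' y :=
    hg.mono fun y hy => hy.exp.deriv
  rw [hderiv.deriv_eq, (hg.self_of_nhds.exp.fun_mul hg').deriv]
  ring

noncomputable def etaExponent (α lam δ t q : ℝ) : ℝ :=
  lam * δ * t / 4 - lam * q ^ 2 / α ^ 2 + (δ - 1) / 2 * log q

theorem exp_etaExponent (α lam δ t : ℝ) {q : ℝ} (hq : 0 < q) :
    exp (etaExponent α lam δ t q)
      = exp (lam * δ * t / 4 - lam * q ^ 2 / α ^ 2) * q ^ ((δ - 1) / 2) := by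
  rw [etaExponent, exp_add, rpow_def_of_pos hq, mul_comm (log q)]

theorem hasDerivAt_etaExponent_time (α lam δ t q : ℝ) :
    HasDerivAt (fun s => etaExponent α lam δ s q) (lam * δ / 4) t := by
  have h := (((hasDerivAt_id t).const_mul (lam * δ)).div_const 4).sub_const
    (lam * q ^ 2 / α ^ 2) |>.add_const ((δ - 1) / 2 * log q)
  simpa [etaExponent] using h

theorem hasDerivAt_etaExponent_space (α lam δ t : ℝ) {q : ℝ} (hq : q ≠ 0) :
    HasDerivAt (etaExponent α lam δ t) ((δ - 1) / 2 / q - 2 * lam * q / α ^ 2) q := by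
  have h := ((hasDerivAt_const q (lam * δ * t / 4)).fun_sub
    (((hasDerivAt_pow 2 q).const_mul lam).div_const (α ^ 2))).fun_add
    ((hasDerivAt_log hq).const_mul ((δ - 1) / 2))
  exact h.congr_deriv (by field_simp; ring)

theorem hasDerivAt_etaExponent_space_deriv (α lam δ : ℝ) {q : ℝ} (hq : q ≠ 0) :
    HasDerivAt (fun p => (δ - 1) / 2 / p - 2 * lam * p / α ^ 2)
      (-((δ - 1) / 2) / q ^ 2 - 2 * lam / α ^ 2) q := by
  have h := ((hasDerivAt_inv hq).const_mul ((δ - 1) / 2)).fun_sub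
    (((hasDerivAt_id' q).const_mul (2 * lam)).div_const (α ^ 2))
  simp only [← div_eq_mul_inv] at h
  exact h.congr_deriv (by ring)

/-- The function `η(t,q) = exp(λδt/4 − λq²/α²)·q^{(δ−1)/2}` solves the backward
equation `θ²·∂η/∂t = −(θ⁴/2)·∂²η/∂q² + (C/q² + D·q²)·η` for `q > 0`, where
`θ = α/2`, `C = (α⁴/128)(δ−1)(δ−3)` and `D = λ²/8`. -/
theorem eta_solves_backward (α lam δ θ C D : ℝ) (hα : 0 < α)
    (hθ : θ = α / 2) (hC : C = α ^ 4 / 128 * (δ - 1) * (δ - 3))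
    (hD : D = lam ^ 2 / 8) (η : ℝ → ℝ → ℝ)
    (hη : ∀ t : ℝ, ∀ q : ℝ, 0 < q →
      η t q = Real.exp (lam * δ * t / 4 - lam * q ^ 2 / α ^ 2) * q ^ ((δ - 1) / 2)) :
    ∀ t : ℝ, ∀ q : ℝ, 0 < q →
      θ ^ 2 * deriv (fun s => η s q) t
        = -(θ ^ 4 / 2) * deriv (deriv fun p => η t p) q
          + (C / q ^ 2 + D * q ^ 2) * η t q := by
  intro t q hq
  have hη_exp {s p : ℝ} (hp : 0 < p) : η s p = exp (etaExponent α lam δ s p) :=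
    (hη s p hp).trans (exp_etaExponent α lam δ s hp).symm
  have htime : (fun s => η s q) = fun s => exp (etaExponent α lam δ s q) :=
    funext fun s => hη_exp hq
  have hspace : (fun p => η t p) =ᶠ[𝓝 q] fun p => exp (etaExponent α lam δ t p) :=
    eventually_of_mem (Ioi_mem_nhds hq) fun p hp => hη_exp hp
  have hφ : ∀ᶠ p in 𝓝 q,
      HasDerivAt (etaExponent α lam δ t) ((δ - 1) / 2 / p - 2 * lam * p / α ^ 2) p :=
    eventually_of_mem (Ioi_mem_nhds hq) fun p hp =>
      hasDerivAt_etaExponent_space α lam δ t (ne_of_gt hp)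
  rw [htime, (hasDerivAt_etaExponent_time α lam δ t q).exp.deriv, hspace.deriv.deriv_eq,
    deriv_deriv_exp_comp hφ (hasDerivAt_etaExponent_space_deriv α lam δ hq.ne'), hη_exp hq,
    hθ, hC, hD]
  field_simp
  ring
end

section
/- Let α > 0, λ ∈ ℝ, δ ∈ ℝ, and set θ = α/2, C = (α⁴/128)·(δ−1)·(δ−3), D = λ²/8. Define S(t,q) = −(α²λδ/16)·t + (λ/4)·q² − (α²(δ−1)/8)·ln q for t ∈ ℝ and q > 0. Then for all t ∈ ℝ and all q > 0: ∂S/∂t(t,q) + (θ²/2)·∂²S/∂q²(t,q) − (1/2)·(∂S/∂q(t,q))² + C/q² + D·q² = 0. -/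
/-! With `B = α²(δ−1)/8` one has `∂S/∂q = λq/2 − B/q` and `∂²S/∂q² = λ/2 + B/q²`, so the left-hand
side is a combination of `1`, `q²` and `q⁻²`; the `q²` coefficient vanishes by the choice of `D`,
the `q⁻²` coefficient by the choice of `C`, and the constant term since `∂S/∂t = −α²λδ/16`. -/

open Real Set Filter

lemma hasDerivAt_quadratic_sub_log (a b c : ℝ) {p : ℝ} (hp : p ≠ 0) :
    HasDerivAt (fun x => a + b * x ^ 2 - c * log x) (2 * b * p - c / p) p := by
  have hquad : HasDerivAt (fun x => b * x ^ 2) (b * (2 * p)) p := by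
    simpa using (hasDerivAt_pow 2 p).const_mul b
  exact ((hquad.const_add a).sub ((hasDerivAt_log hp).const_mul c)).congr_deriv (by ring)

lemma hasDerivAt_linear_sub_div (b c : ℝ) {p : ℝ} (hp : p ≠ 0) :
    HasDerivAt (fun x => b * x - c / x) (b + c / p ^ 2) p := by
  have hinv : HasDerivAt (fun x => c / x) (-(c / p ^ 2)) p := by
    simpa [div_eq_mul_inv] using (hasDerivAt_inv hp).const_mul c
  exact (((hasDerivAt_id p).const_mul b).sub hinv).congr_deriv (by ring)

lemma deriv_eq_of_eqOn_Ioi {f g : ℝ → ℝ} (h : EqOn f g (Ioi 0)) {p : ℝ} (hp : 0 < p) :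
    deriv f p = deriv g p :=
  (h.eventuallyEq_of_mem (Ioi_mem_nhds hp)).deriv_eq

section QuadraticSubLog

variable {f : ℝ → ℝ} {a b c : ℝ}

lemma eqOn_deriv_of_eqOn_quadratic_sub_log
    (hf : EqOn f (fun x => a + b * x ^ 2 - c * log x) (Ioi 0)) :
    EqOn (deriv f) (fun x => 2 * b * x - c / x) (Ioi 0) := fun _ hp =>
  (deriv_eq_of_eqOn_Ioi hf hp).trans (hasDerivAt_quadratic_sub_log a b c (ne_of_gt hp)).deriv

lemma deriv_deriv_of_eqOn_quadratic_sub_log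
    (hf : EqOn f (fun x => a + b * x ^ 2 - c * log x) (Ioi 0)) {q : ℝ} (hq : 0 < q) :
    deriv (deriv f) q = 2 * b + c / q ^ 2 :=
  (deriv_eq_of_eqOn_Ioi (eqOn_deriv_of_eqOn_quadratic_sub_log hf) hq).trans
    (hasDerivAt_linear_sub_div (2 * b) c (ne_of_gt hq)).deriv

end QuadraticSubLog

theorem S_solves_hjb_general (α lam δ θ C D : ℝ)
    (hθ : θ = α / 2) (hC : C = α ^ 4 / 128 * (δ - 1) * (δ - 3))
    (hD : D = lam ^ 2 / 8) (S : ℝ → ℝ → ℝ)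
    (hS : ∀ t : ℝ, ∀ q : ℝ, 0 < q →
      S t q = -(α ^ 2 * lam * δ / 16) * t + lam / 4 * q ^ 2
        - α ^ 2 * (δ - 1) / 8 * Real.log q) :
    ∀ t : ℝ, ∀ q : ℝ, 0 < q →
      deriv (fun s => S s q) t + θ ^ 2 / 2 * deriv (deriv fun p => S t p) q
        - 1 / 2 * (deriv (fun p => S t p) q) ^ 2 + C / q ^ 2 + D * q ^ 2 = 0 := by
  intro t q hq
  have hS_space : EqOn (S t) (fun x => -(α ^ 2 * lam * δ / 16) * t + lam / 4 * x ^ 2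
      - α ^ 2 * (δ - 1) / 8 * log x) (Ioi 0) := fun x hx => hS t x hx
  have hS_affine : (fun s => S s q) = fun s => -(α ^ 2 * lam * δ / 16) * s
      + (lam / 4 * q ^ 2 - α ^ 2 * (δ - 1) / 8 * log q) := by
    funext s
    rw [hS s q hq]
    ring
  have hderiv_time : deriv (fun s => S s q) t = -(α ^ 2 * lam * δ / 16) := by
    rw [hS_affine]
    simp
  rw [hderiv_time, deriv_deriv_of_eqOn_quadratic_sub_log hS_space hq,
    eqOn_deriv_of_eqOn_quadratic_sub_log hS_space hq, hθ, hC, hD]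
  field_simp
  ring

/-- The function `S(t,q) = −(α²λδ/16)·t + (λ/4)·q² − (α²(δ−1)/8)·ln q` solves the
Hamilton–Jacobi–Bellman equation with potential `C/q² + D·q²` for `q > 0`, where
`θ = α/2`, `C = (α⁴/128)(δ−1)(δ−3)` and `D = λ²/8`. -/
theorem S_solves_hjb (α lam δ θ C D : ℝ) (hα : 0 < α)
    (hθ : θ = α / 2) (hC : C = α ^ 4 / 128 * (δ - 1) * (δ - 3))
    (hD : D = lam ^ 2 / 8) (S : ℝ → ℝ → ℝ)
    (hS : ∀ t : ℝ, ∀ q : ℝ, 0 < q →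
      S t q = -(α ^ 2 * lam * δ / 16) * t + lam / 4 * q ^ 2
        - α ^ 2 * (δ - 1) / 8 * Real.log q) :
    ∀ t : ℝ, ∀ q : ℝ, 0 < q →
      deriv (fun s => S s q) t + θ ^ 2 / 2 * deriv (deriv fun p => S t p) q
        - 1 / 2 * (deriv (fun p => S t p) q) ^ 2 + C / q ^ 2 + D * q ^ 2 = 0 :=
  S_solves_hjb_general α lam δ θ C D hθ hC hD S hS
end

section
/- Let α > 0 and λ > 0, and set θ = α/2. Define η_*(t,q) = (16λ^{3/2}/(α³√(2π)))·(1 − e^{−λt})^{−3/2}·q·e^{−3λt/4 − λq²/(α²·tanh(λt/2))} for t > 0 and q ∈ ℝ. Then for all t > 0 and all q ∈ ℝ: −θ²·∂η_*/∂t(t,q) = −(θ⁴/2)·∂²η_*/∂q²(t,q) + (λ²/8)·q²·η_*(t,q). -/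
/-!
Since `(1 - e^{-λt}) e^{λt/2} = 2 sinh(λt/2)`, the function is
`η_*(t,q) = K (2 sinh(λt/2))^{-3/2} q exp(m(t) q²)` with `m(t) = -(λ/α²) coth(λt/2)`.
Then `∂_t η_* / η_* = -(3λ/4) coth(λt/2) + m'(t) q²` and
`∂²_q η_* / η_* = 6m + 4m² q²`, and since `m' = λ²/(2α² sinh²(λt/2))` the two sides of the
equation agree by `cosh² - sinh² = 1`.
-/

open Real

theorem one_sub_exp_neg_rpow_mul_exp {x : ℝ} (hx : 0 ≤ x) (p : ℝ) :
    (1 - exp (-x)) ^ p * exp (p * x / 2) = (2 * sinh (x / 2)) ^ p := by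
  have hfactor : 1 - exp (-x) = 2 * sinh (x / 2) * exp (-(x / 2)) := by
    have h1 : exp (x / 2) * exp (-(x / 2)) = 1 := by rw [← exp_add]; simp
    have h2 : exp (-(x / 2)) * exp (-(x / 2)) = exp (-x) := by rw [← exp_add]; ring_nf
    rw [sinh_eq]
    linear_combination h2 - h1
  have hsinh : 0 ≤ 2 * sinh (x / 2) := by
    have := sinh_nonneg_iff.2 (by linarith : 0 ≤ x / 2); positivity
  rw [hfactor, mul_rpow hsinh (exp_pos _).le, ← exp_mul, mul_assoc, ← exp_add]
  ring_nf
  simp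

theorem hasDerivAt_mul_exp_mul_sq (m x : ℝ) :
    HasDerivAt (fun q => q * exp (m * q ^ 2)) ((1 + 2 * m * x ^ 2) * exp (m * x ^ 2)) x :=
  ((hasDerivAt_id x).fun_mul ((hasDerivAt_pow 2 x).const_mul m).exp).congr_deriv
    (by simp only [one_mul, id_eq, Nat.cast_ofNat, Nat.add_one_sub_one, pow_one]; ring)

theorem deriv_deriv_mul_exp_mul_sq (m x : ℝ) :
    deriv (deriv fun q => q * exp (m * q ^ 2)) x
      = (6 * m + 4 * m ^ 2 * x ^ 2) * (x * exp (m * x ^ 2)) := by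
  have hfirst : (deriv fun q => q * exp (m * q ^ 2))
      = fun q => (1 + 2 * m * q ^ 2) * exp (m * q ^ 2) :=
    funext fun q => (hasDerivAt_mul_exp_mul_sq m q).deriv
  have hsecond := (((hasDerivAt_pow 2 x).const_mul (2 * m)).const_add 1).fun_mul
    ((hasDerivAt_pow 2 x).const_mul m).exp
  rw [hfirst, hsecond.deriv]
  simp only [Nat.cast_ofNat, Nat.add_one_sub_one, pow_one]
  ring

theorem hasDerivAt_two_sinh_half_rpow {lam t : ℝ} (p : ℝ) (ht : sinh (lam * t / 2) ≠ 0) :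
    HasDerivAt (fun s => (2 * sinh (lam * s / 2)) ^ p)
      (p * lam / 2 * (cosh (lam * t / 2) / sinh (lam * t / 2)) * (2 * sinh (lam * t / 2)) ^ p)
      t := by
  have harg : HasDerivAt (fun s => lam * s / 2) (lam / 2) t := by
    simpa using ((hasDerivAt_id t).const_mul lam).div_const 2
  have h2sinh : 2 * sinh (lam * t / 2) ≠ 0 := by simpa using ht
  refine ((harg.sinh.const_mul 2).rpow_const (p := p) (Or.inl h2sinh)).congr_deriv ?_
  rw [rpow_sub_one h2sinh]
  field_simp

theorem hasDerivAt_cosh_div_sinh_half {lam t : ℝ} (ht : sinh (lam * t / 2) ≠ 0) :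
    HasDerivAt (fun s => cosh (lam * s / 2) / sinh (lam * s / 2))
      (-(lam / 2) / sinh (lam * t / 2) ^ 2) t := by
  have harg : HasDerivAt (fun s => lam * s / 2) (lam / 2) t := by
    simpa using ((hasDerivAt_id t).const_mul lam).div_const 2
  refine (harg.cosh.div harg.sinh ht).congr_deriv ?_
  congr 1
  linear_combination (-(lam / 2)) * cosh_sq_sub_sinh_sq (lam * t / 2)

noncomputable def etaStarRate (α lam t : ℝ) : ℝ :=
  -(lam / α ^ 2 * (cosh (lam * t / 2) / sinh (lam * t / 2)))

/-- `η_*` divided by its normalising constant `16λ^{3/2}/(α³√(2π))`. -/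
noncomputable def etaStarShape (α lam t q : ℝ) : ℝ :=
  (2 * sinh (lam * t / 2)) ^ (-(3 : ℝ) / 2) * (q * exp (etaStarRate α lam t * q ^ 2))

theorem hasDerivAt_etaStarRate (α : ℝ) {lam t : ℝ} (ht : sinh (lam * t / 2) ≠ 0) :
    HasDerivAt (etaStarRate α lam) (lam ^ 2 / (2 * α ^ 2 * sinh (lam * t / 2) ^ 2)) t :=
  ((hasDerivAt_cosh_div_sinh_half ht).const_mul (lam / α ^ 2)).fun_neg.congr_deriv (by ring)

theorem hasDerivAt_etaStarShape_time (α q : ℝ) {lam t : ℝ} (ht : sinh (lam * t / 2) ≠ 0) :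
    HasDerivAt (fun s => etaStarShape α lam s q)
      ((-(3 * lam / 4) * (cosh (lam * t / 2) / sinh (lam * t / 2))
        + lam ^ 2 * q ^ 2 / (2 * α ^ 2 * sinh (lam * t / 2) ^ 2)) * etaStarShape α lam t q)
      t := by
  have hgauss := (((hasDerivAt_etaStarRate α ht).mul_const (q ^ 2)).exp).const_mul q
  refine ((hasDerivAt_two_sinh_half_rpow (-(3 : ℝ) / 2) ht).mul hgauss).congr_deriv ?_
  unfold etaStarShape
  ring

theorem deriv_deriv_etaStarShape_space (α lam t q : ℝ) :
    deriv (deriv fun p => etaStarShape α lam t p) q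
      = (6 * etaStarRate α lam t + 4 * etaStarRate α lam t ^ 2 * q ^ 2)
        * etaStarShape α lam t q := by
  unfold etaStarShape
  simp only [deriv_const_mul_field', deriv_deriv_mul_exp_mul_sq]
  ring

theorem etaStarShape_solves_adjoint {α lam t : ℝ} (hα : α ≠ 0)
    (ht : sinh (lam * t / 2) ≠ 0) (q : ℝ) :
    -(α / 2) ^ 2 * deriv (fun s => etaStarShape α lam s q) t
      = -((α / 2) ^ 4 / 2) * deriv (deriv fun p => etaStarShape α lam t p) q
        + lam ^ 2 / 8 * q ^ 2 * etaStarShape α lam t q := by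
  rw [(hasDerivAt_etaStarShape_time α q ht).deriv, deriv_deriv_etaStarShape_space, etaStarRate]
  field_simp
  linear_combination
    128 * lam ^ 2 * q ^ 2 * etaStarShape α lam t q * cosh_sq_sub_sinh_sq (lam * t / 2)

theorem rpow_mul_exp_eq_etaStarShape (α q : ℝ) {lam t : ℝ} (ht : 0 ≤ lam * t) :
    (1 - exp (-(lam * t))) ^ (-(3 : ℝ) / 2)
      * (q * exp (-(3 * lam * t) / 4 - lam * q ^ 2 / (α ^ 2 * tanh (lam * t / 2))))
      = etaStarShape α lam t q := by
  have hexp : exp (-(3 * lam * t) / 4 - lam * q ^ 2 / (α ^ 2 * tanh (lam * t / 2)))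
      = exp (-(3 : ℝ) / 2 * (lam * t) / 2) * exp (etaStarRate α lam t * q ^ 2) := by
    rw [← exp_add, etaStarRate, tanh_eq_sinh_div_cosh, mul_div_assoc', div_div_eq_mul_div]
    ring_nf
  rw [hexp, etaStarShape, ← one_sub_exp_neg_rpow_mul_exp ht]
  ring

/-- For `δ = 3`, the function
`η_*(t,q) = (16λ^{3/2}/(α³√(2π)))·(1 − e^{−λt})^{−3/2}·q·e^{−3λt/4 − λq²/(α²·tanh(λt/2))}`
satisfies the adjoint equation `−θ²·∂η_*/∂t = −(θ⁴/2)·∂²η_*/∂q² + (λ²/8)·q²·η_*`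
for `t > 0`, where `θ = α/2`. -/
theorem eta_star_solves_adjoint_delta_three (α lam θ : ℝ) (hα : 0 < α) (hlam : 0 < lam)
    (hθ : θ = α / 2) (ηs : ℝ → ℝ → ℝ)
    (hηs : ∀ t : ℝ, 0 < t → ∀ q : ℝ,
      ηs t q = 16 * lam ^ ((3 : ℝ) / 2) / (α ^ 3 * Real.sqrt (2 * π))
        * (1 - Real.exp (-(lam * t))) ^ (-(3 : ℝ) / 2) * q
        * Real.exp (-(3 * lam * t) / 4
            - lam * q ^ 2 / (α ^ 2 * Real.tanh (lam * t / 2)))) :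
    ∀ t : ℝ, 0 < t → ∀ q : ℝ,
      -θ ^ 2 * deriv (fun s => ηs s q) t
        = -(θ ^ 4 / 2) * deriv (deriv fun p => ηs t p) q
          + lam ^ 2 / 8 * q ^ 2 * ηs t q := by
  intro t ht q
  set K := 16 * lam ^ ((3 : ℝ) / 2) / (α ^ 3 * Real.sqrt (2 * π))
  have hK : ∀ s, 0 < s → ∀ p, ηs s p = K * etaStarShape α lam s p := fun s hs p => by
    rw [hηs s hs p, mul_assoc, mul_assoc,
      rpow_mul_exp_eq_etaStarShape α p (mul_pos hlam hs).le]
  have hspace : (fun p => ηs t p) = fun p => K * etaStarShape α lam t p := funext (hK t ht)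
  have htime : (fun s => ηs s q) =ᶠ[nhds t] fun s => K * etaStarShape α lam s q := by
    filter_upwards [Ioi_mem_nhds ht] with s hs using hK s hs q
  have hsinh : sinh (lam * t / 2) ≠ 0 := (sinh_pos_iff.2 (by positivity)).ne'
  rw [htime.deriv_eq, hspace, hK t ht q, hθ]
  simp only [deriv_const_mul_field']
  linear_combination K * etaStarShape_solves_adjoint hα.ne' hsinh q
end

section
/- Let α > 0, λ > 0, z₀ ∈ ℝ, and set θ = α/2. Define η_*(t,q) = (1/α)·√(λ/(π·sinh(λt/2)))·exp((−λq² − λq²e^{−λt} + 4λq·z₀·e^{−λt/2} − 2λz₀²e^{−λt})/(α²(1 − e^{−λt}))) for t > 0 and q ∈ ℝ. Then for all t > 0 and all q ∈ ℝ: −θ²·∂η_*/∂t(t,q) = −(θ⁴/2)·∂²η_*/∂q²(t,q) + (λ²/8)·q²·η_*(t,q). -/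
/-!
Writing `η_*(t, q) = c(t) · exp (a(t) q² + b(t) q + d(t))`, the equation splits by powers of `q`
into three ordinary differential equations: a Riccati equation for `a`, a linear one for `b`, and
one coupling `c` and `d`. For the Mehler-type kernel at hand, `a = -(λ/α²) coth(λt/2)`,
`b = 2λz₀ / (α² sinh(λt/2))`, `d = -(λz₀²/α²)(coth(λt/2) - 1)` and `c = α⁻¹ √(λ / (π sinh(λt/2)))`,
and the three equations follow from `cosh² = sinh² + 1`.
-/

open Real Filter Topology

theorem deriv_deriv_mul_exp_quadratic (k A B C q : ℝ) :
    deriv (deriv fun p => k * exp (A * p ^ 2 + B * p + C)) q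
      = k * exp (A * q ^ 2 + B * q + C) * ((2 * A * q + B) ^ 2 + 2 * A) := by
  have hφ (p : ℝ) : HasDerivAt (fun p => A * p ^ 2 + B * p + C) (2 * A * p + B) p := by
    refine ((((hasDerivAt_pow 2 p).const_mul A).fun_add
      ((hasDerivAt_id' p).const_mul B)).add_const C).congr_deriv ?_
    norm_num
    ring
  have hφ' : HasDerivAt (fun p => 2 * A * p + B) (2 * A) q := by
    simpa using ((hasDerivAt_id' q).const_mul (2 * A)).add_const B
  have hfirst : (deriv fun p => k * exp (A * p ^ 2 + B * p + C))
      = fun p => k * exp (A * p ^ 2 + B * p + C) * (2 * A * p + B) :=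
    funext fun p => (((hφ p).exp).const_mul k).deriv.trans (by ring)
  rw [hfirst, ((((hφ q).exp).const_mul k).fun_mul hφ').deriv]
  ring

theorem hasDerivAt_mul_exp_quadratic {c a b d : ℝ → ℝ} {c' a' b' d' t : ℝ}
    (hc : HasDerivAt c c' t) (ha : HasDerivAt a a' t) (hb : HasDerivAt b b' t)
    (hd : HasDerivAt d d' t) (q : ℝ) :
    HasDerivAt (fun s => c s * exp (a s * q ^ 2 + b s * q + d s))
      (exp (a t * q ^ 2 + b t * q + d t) * (c' + c t * (a' * q ^ 2 + b' * q + d'))) t := by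
  refine (hc.fun_mul
    (((ha.mul_const (q ^ 2)).fun_add (hb.mul_const q)).fun_add hd).exp).congr_deriv ?_
  ring

theorem mul_exp_quadratic_solves_of_riccati {θ D : ℝ} {c a b d : ℝ → ℝ} {c' a' b' d' t : ℝ}
    (hc : HasDerivAt c c' t) (ha : HasDerivAt a a' t) (hb : HasDerivAt b b' t)
    (hd : HasDerivAt d d' t)
    (ha' : -θ ^ 2 * a' = -2 * θ ^ 4 * a t ^ 2 + D)
    (hb' : -θ ^ 2 * b' = -2 * θ ^ 4 * a t * b t)
    (hcd' : -θ ^ 2 * (c' + c t * d') = -θ ^ 4 * c t * (a t + b t ^ 2 / 2))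
    {f : ℝ → ℝ → ℝ} (hf : ∀ᶠ s in 𝓝 t, ∀ p, f s p = c s * exp (a s * p ^ 2 + b s * p + d s))
    (q : ℝ) :
    -θ ^ 2 * deriv (fun s => f s q) t
      = -(θ ^ 4 / 2) * deriv (deriv fun p => f t p) q + D * q ^ 2 * f t q := by
  have hft : (fun p => f t p) = fun p => c t * exp (a t * p ^ 2 + b t * p + d t) :=
    funext hf.self_of_nhds
  have hfs : (fun s => f s q) =ᶠ[𝓝 t] fun s => c s * exp (a s * q ^ 2 + b s * q + d s) :=
    hf.mono fun s hs => hs q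
  rw [hfs.deriv_eq, (hasDerivAt_mul_exp_quadratic hc ha hb hd q).deriv, hft,
    deriv_deriv_mul_exp_quadratic, hf.self_of_nhds q]
  linear_combination
    exp (a t * q ^ 2 + b t * q + d t) * (c t * q ^ 2 * ha' + c t * q * hb' + hcd')

noncomputable section

namespace Mehler

variable (α lam z₀ : ℝ)

def amplitude (t : ℝ) : ℝ := 1 / α * √(lam / (π * sinh (lam * t / 2)))

def quadCoeff (t : ℝ) : ℝ := -(lam / α ^ 2) * (cosh (lam * t / 2) / sinh (lam * t / 2))

def linCoeff (t : ℝ) : ℝ := 2 * lam * z₀ / (α ^ 2 * sinh (lam * t / 2))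

def constCoeff (t : ℝ) : ℝ :=
  -(lam * z₀ ^ 2 / α ^ 2) * (cosh (lam * t / 2) / sinh (lam * t / 2) - 1)

variable {α lam z₀} {t : ℝ}

theorem hasDerivAt_sinh_half (t : ℝ) :
    HasDerivAt (fun s => sinh (lam * s / 2)) (cosh (lam * t / 2) * (lam / 2)) t := by
  simpa using (((hasDerivAt_id' t).const_mul lam).div_const 2).sinh

theorem hasDerivAt_coth_half (hS : sinh (lam * t / 2) ≠ 0) :
    HasDerivAt (fun s => cosh (lam * s / 2) / sinh (lam * s / 2))
      (-(lam / 2) / sinh (lam * t / 2) ^ 2) t := by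
  have hcosh : HasDerivAt (fun s => cosh (lam * s / 2)) (sinh (lam * t / 2) * (lam / 2)) t := by
    simpa using (((hasDerivAt_id' t).const_mul lam).div_const 2).cosh
  refine (hcosh.div (hasDerivAt_sinh_half t) hS).congr_deriv ?_
  congr 1
  linear_combination (-(lam / 2)) * cosh_sq (lam * t / 2)

theorem hasDerivAt_quadCoeff (hS : sinh (lam * t / 2) ≠ 0) :
    HasDerivAt (quadCoeff α lam) (lam ^ 2 / (2 * α ^ 2 * sinh (lam * t / 2) ^ 2)) t :=
  ((hasDerivAt_coth_half hS).const_mul _).congr_deriv (by ring)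

theorem hasDerivAt_linCoeff (hα : α ≠ 0) (hS : sinh (lam * t / 2) ≠ 0) :
    HasDerivAt (linCoeff α lam z₀)
      (-(lam ^ 2 * z₀ * cosh (lam * t / 2)) / (α ^ 2 * sinh (lam * t / 2) ^ 2)) t := by
  refine ((hasDerivAt_const t (2 * lam * z₀)).div ((hasDerivAt_sinh_half t).const_mul (α ^ 2))
    (mul_ne_zero (pow_ne_zero 2 hα) hS)).congr_deriv ?_
  field_simp
  ring

theorem hasDerivAt_constCoeff (hS : sinh (lam * t / 2) ≠ 0) :
    HasDerivAt (constCoeff α lam z₀)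
      (lam ^ 2 * z₀ ^ 2 / (2 * α ^ 2 * sinh (lam * t / 2) ^ 2)) t :=
  (((hasDerivAt_coth_half hS).sub_const 1).const_mul _).congr_deriv (by ring)

theorem hasDerivAt_amplitude (hlam : 0 < lam) (ht : 0 < t) :
    HasDerivAt (amplitude α lam)
      (-(lam / 4) * (cosh (lam * t / 2) / sinh (lam * t / 2)) * amplitude α lam t) t := by
  have hS : 0 < sinh (lam * t / 2) := sinh_pos_iff.2 (by positivity)
  have hg := (hasDerivAt_const t lam).div ((hasDerivAt_sinh_half t).const_mul π)
    (by positivity)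
  have hg0 : 0 < lam / (π * sinh (lam * t / 2)) := by positivity
  refine ((hg.sqrt hg0.ne').const_mul (1 / α)).congr_deriv ?_
  rw [amplitude]
  simp only [Pi.div_apply]
  field_simp
  rw [sq_sqrt hg0.le]
  field_simp
  ring

theorem quadCoeff_riccati (hα : α ≠ 0) (hS : sinh (lam * t / 2) ≠ 0) :
    -(α / 2) ^ 2 * (lam ^ 2 / (2 * α ^ 2 * sinh (lam * t / 2) ^ 2))
      = -2 * (α / 2) ^ 4 * quadCoeff α lam t ^ 2 + lam ^ 2 / 8 := by
  rw [quadCoeff]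
  field_simp
  linear_combination 8 * lam ^ 2 * cosh_sq (lam * t / 2)

theorem linCoeff_riccati (hα : α ≠ 0) (hS : sinh (lam * t / 2) ≠ 0) :
    -(α / 2) ^ 2 * (-(lam ^ 2 * z₀ * cosh (lam * t / 2)) / (α ^ 2 * sinh (lam * t / 2) ^ 2))
      = -2 * (α / 2) ^ 4 * quadCoeff α lam t * linCoeff α lam z₀ t := by
  rw [quadCoeff, linCoeff]
  field_simp

theorem amplitude_constCoeff_riccati (hα : α ≠ 0) (hS : sinh (lam * t / 2) ≠ 0) :
    -(α / 2) ^ 2 * (-(lam / 4) * (cosh (lam * t / 2) / sinh (lam * t / 2)) * amplitude α lam t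
        + amplitude α lam t * (lam ^ 2 * z₀ ^ 2 / (2 * α ^ 2 * sinh (lam * t / 2) ^ 2)))
      = -(α / 2) ^ 4 * amplitude α lam t
        * (quadCoeff α lam t + linCoeff α lam z₀ t ^ 2 / 2) := by
  rw [quadCoeff, linCoeff]
  field_simp
  ring

theorem exponent_eq (hα : α ≠ 0) (hS : sinh (lam * t / 2) ≠ 0) (q : ℝ) :
    (-(lam * q ^ 2) - lam * q ^ 2 * exp (-(lam * t)) + 4 * lam * q * z₀ * exp (-(lam * t) / 2)
        - 2 * lam * z₀ ^ 2 * exp (-(lam * t))) / (α ^ 2 * (1 - exp (-(lam * t))))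
      = quadCoeff α lam t * q ^ 2 + linCoeff α lam z₀ t * q + constCoeff α lam z₀ t := by
  have hu : exp (-(lam * t)) = exp (-(lam * t / 2)) ^ 2 := by rw [← exp_nat_mul]; ring_nf
  have hv : exp (-(lam * t) / 2) = exp (-(lam * t / 2)) := by ring_nf
  have hw : exp (lam * t / 2) = (exp (-(lam * t / 2)))⁻¹ := by rw [exp_neg, inv_inv]
  have hv0 : exp (-(lam * t / 2)) ≠ 0 := (exp_pos _).ne'
  have h1 : 1 - exp (-(lam * t / 2)) ^ 2 = 2 * exp (-(lam * t / 2)) * sinh (lam * t / 2) := by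
    rw [sinh_eq, hw]
    field_simp
  have h1' : 1 - exp (-(lam * t / 2)) ^ 2 ≠ 0 := by
    rw [h1]
    exact mul_ne_zero (mul_ne_zero two_ne_zero hv0) hS
  rw [quadCoeff, linCoeff, constCoeff, sinh_eq, cosh_eq, hu, hv, hw]
  field_simp
  ring

end Mehler

end

/-- For `δ = 1`, the function
`η_*(t,q) = (1/α)·√(λ/(π·sinh(λt/2)))·exp((−λq² − λq²e^{−λt} + 4λq·z₀·e^{−λt/2} − 2λz₀²e^{−λt})/(α²(1 − e^{−λt})))`
satisfies the adjoint equation `−θ²·∂η_*/∂t = −(θ⁴/2)·∂²η_*/∂q² + (λ²/8)·q²·η_*`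
for `t > 0`, where `θ = α/2`. -/
theorem eta_star_solves_adjoint_delta_one (α lam z₀ θ : ℝ) (hα : 0 < α) (hlam : 0 < lam)
    (hθ : θ = α / 2) (ηs : ℝ → ℝ → ℝ)
    (hηs : ∀ t : ℝ, 0 < t → ∀ q : ℝ,
      ηs t q = 1 / α * Real.sqrt (lam / (π * Real.sinh (lam * t / 2)))
        * Real.exp ((-(lam * q ^ 2) - lam * q ^ 2 * Real.exp (-(lam * t))
            + 4 * lam * q * z₀ * Real.exp (-(lam * t) / 2)
            - 2 * lam * z₀ ^ 2 * Real.exp (-(lam * t)))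
          / (α ^ 2 * (1 - Real.exp (-(lam * t)))))) :
    ∀ t : ℝ, 0 < t → ∀ q : ℝ,
      -θ ^ 2 * deriv (fun s => ηs s q) t
        = -(θ ^ 4 / 2) * deriv (deriv fun p => ηs t p) q
          + lam ^ 2 / 8 * q ^ 2 * ηs t q := by
  subst hθ
  intro t ht q
  have hα0 : α ≠ 0 := hα.ne'
  have hS (s : ℝ) (hs : 0 < s) : sinh (lam * s / 2) ≠ 0 := (sinh_pos_iff.2 (by positivity)).ne'
  have hη : ∀ᶠ s in 𝓝 t, ∀ p, ηs s p = Mehler.amplitude α lam s * exp (Mehler.quadCoeff α lam s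
      * p ^ 2 + Mehler.linCoeff α lam z₀ s * p + Mehler.constCoeff α lam z₀ s) := by
    filter_upwards [eventually_gt_nhds ht] with s hs p
    rw [hηs s hs p, Mehler.exponent_eq hα0 (hS s hs)]
    rfl
  exact mul_exp_quadratic_solves_of_riccati (Mehler.hasDerivAt_amplitude hlam ht)
    (Mehler.hasDerivAt_quadCoeff (hS t ht)) (Mehler.hasDerivAt_linCoeff hα0 (hS t ht))
    (Mehler.hasDerivAt_constCoeff (hS t ht)) (Mehler.quadCoeff_riccati hα0 (hS t ht))
    (Mehler.linCoeff_riccati hα0 (hS t ht)) (Mehler.amplitude_constCoeff_riccati hα0 (hS t ht))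
    hη q
end
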